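/- For all real numbers x ≥ 0 and y ≥ 0 one has Φ̄(−x−y) − e^{−2xy}·Φ̄(−x+y) ≤ 2·y·(φ(x) + x). -/

import Mathlib

open Real Filter MeasureTheory

/-!
With `F t = Φ̄(-x-t) - e^{-2xt} Φ̄(-x+t)` we have `F 0 = 0`. The tilting identity
`e^{-2xt} φ(t-x) = φ(x+t)` and the symmetry of `φ` give
`F' t = 2 φ(x+t) + 2x e^{-2xt} Φ̄(t-x)`, which for `t ≥ 0` is at most `2 (φ x + x)`
because `φ` decreases on `[0, ∞)` and `Φ̄ ≤ 1`; the mean value theorem concludes.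
-/

/-- Standard normal density. -/
noncomputable def stdPhi (u : ℝ) : ℝ := (Real.sqrt (2 * Real.pi))⁻¹ * Real.exp (-u ^ 2 / 2)

/-- Standard normal distribution function. -/
noncomputable def stdCdf (u : ℝ) : ℝ := ∫ s in Set.Iic u, stdPhi s

/-- Standard normal survivor function. -/
noncomputable def stdSurv (u : ℝ) : ℝ := 1 - stdCdf u

noncomputable def fFun (x y : ℝ) : ℝ := stdSurv (x - y) - Real.exp (2 * x * y) * stdSurv (x + y)

noncomputable def gFun (x y : ℝ) : ℝ := 1 - x * stdSurv (x + y) / stdPhi (x + y)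

lemma stdPhi_eq_gaussianPDFReal : stdPhi = ProbabilityTheory.gaussianPDFReal 0 1 := by
  ext u
  simp [stdPhi, ProbabilityTheory.gaussianPDFReal]

lemma stdPhi_nonneg (u : ℝ) : 0 ≤ stdPhi u := by
  unfold stdPhi
  positivity

lemma continuous_stdPhi : Continuous stdPhi := by
  unfold stdPhi
  fun_prop

lemma integrable_stdPhi : Integrable stdPhi :=
  stdPhi_eq_gaussianPDFReal ▸ ProbabilityTheory.integrable_gaussianPDFReal 0 1

lemma stdPhi_neg (u : ℝ) : stdPhi (-u) = stdPhi u := by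
  simp [stdPhi]

lemma stdPhi_antitoneOn : AntitoneOn stdPhi (Set.Ici 0) := by
  intro a ha b _ hab
  unfold stdPhi
  gcongr

lemma exp_mul_stdPhi_sub (x t : ℝ) :
    Real.exp (-(2 * x * t)) * stdPhi (t - x) = stdPhi (x + t) := by
  unfold stdPhi
  rw [mul_left_comm, ← Real.exp_add]
  ring_nf

lemma stdCdf_nonneg (u : ℝ) : 0 ≤ stdCdf u :=
  setIntegral_nonneg measurableSet_Iic fun s _ => stdPhi_nonneg s

lemma stdSurv_le_one (u : ℝ) : stdSurv u ≤ 1 :=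
  sub_le_self 1 (stdCdf_nonneg u)

lemma hasDerivAt_stdCdf (u : ℝ) : HasDerivAt stdCdf (stdPhi u) u := by
  have hrepr : stdCdf = fun v => stdCdf 0 + ∫ t in (0 : ℝ)..v, stdPhi t := by
    funext v
    rw [stdCdf, stdCdf, ← intervalIntegral.integral_Iic_sub_Iic integrable_stdPhi.integrableOn
      integrable_stdPhi.integrableOn, add_sub_cancel]
  rw [hrepr]
  exact (intervalIntegral.integral_hasDerivAt_right integrable_stdPhi.intervalIntegrable
    (continuous_stdPhi.stronglyMeasurableAtFilter _ _) continuous_stdPhi.continuousAt).const_add _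

lemma hasDerivAt_stdSurv (u : ℝ) : HasDerivAt stdSurv (-stdPhi u) u :=
  (hasDerivAt_stdCdf u).const_sub 1

lemma hasDerivAt_surv_sub_exp_mul_surv (x t : ℝ) :
    HasDerivAt (fun s => stdSurv (-x - s) - Real.exp (-(2 * x * s)) * stdSurv (-x + s))
      (2 * stdPhi (x + t) + 2 * x * (Real.exp (-(2 * x * t)) * stdSurv (-x + t))) t := by
  have hleft := (hasDerivAt_stdSurv (-x - t)).comp t ((hasDerivAt_id t).const_sub (-x))
  have hexp := ((hasDerivAt_id t).const_mul (2 * x)).neg.exp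
  have hright := (hasDerivAt_stdSurv (-x + t)).comp t ((hasDerivAt_id t).const_add (-x))
  have hsymm : stdPhi (-x - t) = stdPhi (x + t) := by
    rw [← stdPhi_neg, neg_sub, sub_neg_eq_add, add_comm]
  have htilt := exp_mul_stdPhi_sub x t
  rw [← neg_add_eq_sub] at htilt
  refine (hleft.sub (hexp.mul hright)).congr_deriv ?_
  simp only [Pi.neg_apply, Function.comp_apply, id]
  linear_combination hsymm + htilt

lemma deriv_surv_sub_exp_mul_surv_le {x t : ℝ} (hx : 0 ≤ x) (ht : 0 ≤ t) :
    2 * stdPhi (x + t) + 2 * x * (Real.exp (-(2 * x * t)) * stdSurv (-x + t)) ≤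
      2 * (stdPhi x + x) := by
  have hphi : stdPhi (x + t) ≤ stdPhi x :=
    stdPhi_antitoneOn (Set.mem_Ici.2 hx) (Set.mem_Ici.2 (by linarith)) (by linarith)
  have hexp : Real.exp (-(2 * x * t)) ≤ 1 := Real.exp_le_one_iff.2 (neg_nonpos.2 (by positivity))
  have hprod : Real.exp (-(2 * x * t)) * stdSurv (-x + t) ≤ 1 :=
    (mul_le_of_le_one_right (Real.exp_pos _).le (stdSurv_le_one _)).trans hexp
  linarith [mul_le_mul_of_nonneg_left hprod hx]

/-- Upper bound Φ̄(−x−y) − e^{−2xy}Φ̄(−x+y) ≤ 2y(φ(x) + x) for x, y ≥ 0. -/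
theorem surv_diff_le (x y : ℝ) (hx : 0 ≤ x) (hy : 0 ≤ y) :
    stdSurv (-x - y) - Real.exp (-(2 * x * y)) * stdSurv (-x + y) ≤
      2 * y * (stdPhi x + x) := by
  set F := fun s => stdSurv (-x - s) - Real.exp (-(2 * x * s)) * stdSurv (-x + s)
  have hF : ∀ t, HasDerivAt F _ t := hasDerivAt_surv_sub_exp_mul_surv x
  have hF0 : F 0 = 0 := by simp [F]
  have hmvt := (convex_Ici (0 : ℝ)).image_sub_le_mul_sub_of_deriv_le
    (fun t _ => (hF t).continuousAt.continuousWithinAt)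
    (fun t _ => (hF t).differentiableAt.differentiableWithinAt)
    (fun t ht => (hF t).deriv ▸ deriv_surv_sub_exp_mul_surv_le hx (interior_subset ht))
    0 Set.self_mem_Ici y hy hy
  simp only [hF0, sub_zero] at hmvt
  linarith
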